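/- Multivariate deformed Cauchy formula: let 0 < τ₂ < τ₁ be reals, let n, k be naturals with k ≥ 1, and let x₁, …, x_{k+1} be real numbers. Then C(x₁ + ⋯ + x_{k+1}, n) = Σ τ₁^{Σ_{j=1}^{k} r_j(z_j − (n − s_j))} · τ₂^{Σ_{j=1}^{k} (n − s_j)(x_j − r_j)} · ∏_{j=1}^{k+1} C(x_j, r_j), where the sum runs over all tuples (r₁,…,r_k) of naturals with r₁ + ⋯ + r_k ≤ n, and where s_j = r₁ + ⋯ + r_j, r_{k+1} = n − s_k, and z_j = x_{j+1} + ⋯ + x_{k+1}. -/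

import Mathlib

/-!
For two variables, both sides `F n` of the formula satisfy `[n+1] F (n+1) = [x+y-n] F n`. On
the right this comes from `[a+b] = τ₂^b [a] + τ₁^a [b]`, used once to split
`[x+y-n] = τ₂^(x-a) [y-b] + τ₁^(y-b) [x-a]` against the term indexed by `(a, b)`, and once more
to recombine the two contributions to each term of degree `n+1` into `[n+1]`.

For more variables, write `ρ = (r₁, …, r_k, n - s_k)`, so that `n - s_j = Σ_{i>j} ρ_i`; the
exponents become `Σ_{j<i} ρ_j (x_i - ρ_i)` and `Σ_{j<i} ρ_i (x_j - ρ_j)`, which split additively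
when `x₁` is separated from `x₂ + ⋯ + x_{k+1}`, so the two-variable formula gives an induction
on the number of variables.
-/

open Finset

noncomputable def dnum (τ₁ τ₂ x : ℝ) : ℝ := (τ₁ ^ x - τ₂ ^ x) / (τ₁ - τ₂)

noncomputable def dfac (τ₁ τ₂ : ℝ) (r : ℕ) : ℝ :=
  ∏ j ∈ Finset.range r, dnum τ₁ τ₂ ((j : ℝ) + 1)

noncomputable def dfall (τ₁ τ₂ x : ℝ) (r : ℕ) : ℝ :=
  ∏ i ∈ Finset.range r, dnum τ₁ τ₂ (x - (i : ℝ))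

noncomputable def dbinom (τ₁ τ₂ x : ℝ) (r : ℕ) : ℝ := dfall τ₁ τ₂ x r / dfac τ₁ τ₂ r

noncomputable def dmulti (τ₁ τ₂ x : ℝ) {k : ℕ} (r : Fin k → ℕ) : ℝ :=
  dfall τ₁ τ₂ x (∑ j, r j) / ∏ j, dfac τ₁ τ₂ (r j)

open Finset.Nat

theorem Finset.Nat.sum_antidiagonalTuple_succ {M : Type*} [AddCommMonoid M] (k n : ℕ)
    (f : (Fin (k + 1) → ℕ) → M) :
    ∑ ρ ∈ antidiagonalTuple (k + 1) n, f ρ =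
      ∑ p ∈ antidiagonal n, ∑ ρ ∈ antidiagonalTuple k p.2, f (Fin.cons p.1 ρ) := by
  rw [sum_sigma']
  refine sum_nbij' (fun ρ => ⟨(ρ 0, n - ρ 0), Fin.tail ρ⟩) (fun q => Fin.cons q.1.1 q.2)
    ?_ ?_ ?_ ?_ ?_
  · intro ρ hρ
    simp only [mem_antidiagonalTuple, Fin.sum_univ_succ, mem_sigma,
      HasAntidiagonal.mem_antidiagonal] at hρ ⊢
    exact ⟨by omega, by simp only [Fin.tail]; omega⟩
  · rintro ⟨⟨a, b⟩, ρ⟩ hq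
    simp only [mem_antidiagonalTuple, Fin.sum_univ_succ, mem_sigma,
      HasAntidiagonal.mem_antidiagonal] at hq ⊢
    simpa [hq.2] using hq.1
  · intro ρ _
    simp
  · rintro ⟨⟨a, b⟩, ρ⟩ hq
    simp only [mem_sigma, HasAntidiagonal.mem_antidiagonal] at hq
    simp [← hq.1]
  · intro ρ _
    simp

theorem Finset.Nat.sum_antidiagonalTuple_succ_eq_sum_snoc {M : Type*} [AddCommMonoid M] (k n : ℕ)
    (f : (Fin (k + 1) → ℕ) → M) :
    ∑ ρ ∈ antidiagonalTuple (k + 1) n, f ρ =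
      ∑ r ∈ (Fintype.piFinset fun _ : Fin k => range (n + 1)).filter (fun r => ∑ j, r j ≤ n),
        f (Fin.snoc r (n - ∑ i, r i)) := by
  have hsnoc_init : ∀ ρ ∈ antidiagonalTuple (k + 1) n,
      Fin.snoc (Fin.init ρ) (n - ∑ i, Fin.init ρ i) = ρ := by
    intro ρ hρ
    rw [mem_antidiagonalTuple, Fin.sum_univ_castSucc] at hρ
    conv_rhs => rw [← Fin.snoc_init_self ρ]
    congr 1
    simp only [Fin.init]; omega
  refine sum_nbij' Fin.init (fun r => Fin.snoc r (n - ∑ i, r i)) ?_ ?_ hsnoc_init ?_ ?_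
  · intro ρ hρ
    simp only [mem_antidiagonalTuple, Fin.sum_univ_castSucc, mem_filter, Fintype.mem_piFinset,
      mem_range] at hρ ⊢
    refine ⟨fun i => ?_, by simp only [Fin.init]; omega⟩
    have := single_le_sum (fun j _ => Nat.zero_le (ρ (Fin.castSucc j))) (mem_univ i)
    simp only [Fin.init]; omega
  · intro r hr
    simp only [mem_filter, mem_antidiagonalTuple, Fin.sum_univ_castSucc, Fin.snoc_castSucc,
      Fin.snoc_last] at hr ⊢
    omega
  · intro r _
    simp
  · intro ρ hρ
    rw [hsnoc_init ρ hρ]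

lemma Fin.sum_Iic_castSucc_add_sum_Ioi_castSucc {M : Type*} [AddCommMonoid M] {k : ℕ}
    (f : Fin (k + 1) → M) (j : Fin k) :
    ∑ i ∈ Iic j, f i.castSucc + ∑ i ∈ Ioi j.castSucc, f i = ∑ i, f i := by
  rw [← Fin.sum_Iic_castSucc, ← sum_filter_add_sum_filter_not univ (· ≤ j.castSucc)]
  simp only [filter_ge_eq_Iic, not_le, filter_lt_eq_Ioi]

section

variable {τ₁ τ₂ : ℝ}

@[simp]
lemma dnum_zero : dnum τ₁ τ₂ 0 = 0 := by
  simp [dnum]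

lemma dnum_add (h₁ : 0 < τ₁) (h₂ : 0 < τ₂) (a b : ℝ) :
    dnum τ₁ τ₂ (a + b) = τ₂ ^ b * dnum τ₁ τ₂ a + τ₁ ^ a * dnum τ₁ τ₂ b := by
  simp only [dnum, Real.rpow_add h₁, Real.rpow_add h₂]
  ring

lemma dnum_pos (h₂ : 0 ≤ τ₂) (h : τ₂ < τ₁) {x : ℝ} (hx : 0 < x) : 0 < dnum τ₁ τ₂ x :=
  div_pos (sub_pos.2 (Real.rpow_lt_rpow h₂ h hx)) (sub_pos.2 h)

lemma dfac_pos (h₂ : 0 ≤ τ₂) (h : τ₂ < τ₁) (r : ℕ) : 0 < dfac τ₁ τ₂ r :=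
  prod_pos fun _ _ => dnum_pos h₂ h (by positivity)

lemma dnum_succ_mul_dbinom_succ (h₂ : 0 ≤ τ₂) (h : τ₂ < τ₁) (x : ℝ) (r : ℕ) :
    dnum τ₁ τ₂ ((r + 1 : ℕ) : ℝ) * dbinom τ₁ τ₂ x (r + 1) =
      dnum τ₁ τ₂ (x - r) * dbinom τ₁ τ₂ x r := by
  have hr : dnum τ₁ τ₂ ((r + 1 : ℕ) : ℝ) ≠ 0 := (dnum_pos h₂ h (by positivity)).ne'
  have hfac : dfac τ₁ τ₂ r ≠ 0 := (dfac_pos h₂ h r).ne'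
  simp only [dbinom, dfall, dfac, prod_range_succ] at hfac ⊢
  push_cast at hr ⊢
  field_simp

noncomputable def dbinomAddTerm (τ₁ τ₂ x y : ℝ) (p : ℕ × ℕ) : ℝ :=
  τ₁ ^ ((p.1 : ℝ) * (y - p.2)) * τ₂ ^ ((p.2 : ℝ) * (x - p.1)) *
    (dbinom τ₁ τ₂ x p.1 * dbinom τ₁ τ₂ y p.2)

lemma dnum_mul_dbinomAddTerm (h₂ : 0 < τ₂) (h : τ₂ < τ₁) (x y : ℝ) (a b : ℕ) :
    dnum τ₁ τ₂ (x + y - (a + b : ℕ)) * dbinomAddTerm τ₁ τ₂ x y (a, b) =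
      τ₁ ^ (a : ℝ) * dnum τ₁ τ₂ ((b + 1 : ℕ) : ℝ) * dbinomAddTerm τ₁ τ₂ x y (a, b + 1) +
        τ₂ ^ (b : ℝ) * dnum τ₁ τ₂ ((a + 1 : ℕ) : ℝ) * dbinomAddTerm τ₁ τ₂ x y (a + 1, b) := by
  have h₁ : 0 < τ₁ := h₂.trans h
  have hsplit : dnum τ₁ τ₂ (x + y - (a + b : ℕ)) =
      τ₂ ^ (x - a) * dnum τ₁ τ₂ (y - b) + τ₁ ^ (y - b) * dnum τ₁ τ₂ (x - a) := by
    rw [← dnum_add h₁ h₂]; push_cast; ring_nf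
  set A := τ₁ ^ ((a : ℝ) * (y - (b + 1 : ℕ)))
  set B := τ₂ ^ ((b : ℝ) * (x - (a + 1 : ℕ)))
  have e₁ : τ₁ ^ ((a : ℝ) * (y - b)) = τ₁ ^ (a : ℝ) * A := by
    rw [← Real.rpow_add h₁]; push_cast; ring_nf
  have e₂ : τ₂ ^ ((b : ℝ) * (x - a)) = τ₂ ^ (b : ℝ) * B := by
    rw [← Real.rpow_add h₂]; push_cast; ring_nf
  have e₃ : τ₁ ^ (((a + 1 : ℕ) : ℝ) * (y - b)) = τ₁ ^ (y - b) * (τ₁ ^ (a : ℝ) * A) := by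
    rw [← e₁, ← Real.rpow_add h₁]; push_cast; ring_nf
  have e₄ : τ₂ ^ (((b + 1 : ℕ) : ℝ) * (x - a)) = τ₂ ^ (x - a) * (τ₂ ^ (b : ℝ) * B) := by
    rw [← e₂, ← Real.rpow_add h₂]; push_cast; ring_nf
  have hx := dnum_succ_mul_dbinom_succ h₂.le h x a
  have hy := dnum_succ_mul_dbinom_succ h₂.le h y b
  simp only [dbinomAddTerm]
  rw [hsplit, e₁, e₂, e₃, e₄]
  linear_combination (-(τ₂ ^ (x - a) * τ₁ ^ (a : ℝ) * A * τ₂ ^ (b : ℝ) * B * dbinom τ₁ τ₂ x a)) * hy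
    + (-(τ₁ ^ (y - b) * τ₁ ^ (a : ℝ) * A * τ₂ ^ (b : ℝ) * B * dbinom τ₁ τ₂ y b)) * hx

theorem dbinom_add (h₂ : 0 < τ₂) (h : τ₂ < τ₁) (x y : ℝ) (n : ℕ) :
    dbinom τ₁ τ₂ (x + y) n = ∑ p ∈ antidiagonal n, dbinomAddTerm τ₁ τ₂ x y p := by
  induction n with
  | zero => simp [dbinomAddTerm, dbinom, dfall, dfac]
  | succ n ih =>
    have hn : dnum τ₁ τ₂ ((n + 1 : ℕ) : ℝ) ≠ 0 := (dnum_pos h₂.le h (by positivity)).ne'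
    refine mul_left_cancel₀ hn ?_
    calc dnum τ₁ τ₂ ((n + 1 : ℕ) : ℝ) * dbinom τ₁ τ₂ (x + y) (n + 1)
        = ∑ p ∈ antidiagonal n,
            dnum τ₁ τ₂ (x + y - (p.1 + p.2 : ℕ)) * dbinomAddTerm τ₁ τ₂ x y p := by
          rw [dnum_succ_mul_dbinom_succ h₂.le h, ih, mul_sum]
          refine sum_congr rfl fun p hp => ?_
          rw [mem_antidiagonal.1 hp]
      _ = ∑ p ∈ antidiagonal (n + 1),
              τ₁ ^ (p.1 : ℝ) * dnum τ₁ τ₂ (p.2 : ℝ) * dbinomAddTerm τ₁ τ₂ x y p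
          + ∑ p ∈ antidiagonal (n + 1),
              τ₂ ^ (p.2 : ℝ) * dnum τ₁ τ₂ (p.1 : ℝ) * dbinomAddTerm τ₁ τ₂ x y p := by
          rw [sum_antidiagonal_succ', sum_antidiagonal_succ (n := n)]
          simp only [Nat.cast_zero, dnum_zero, mul_zero, zero_mul, zero_add, ← sum_add_distrib]
          exact sum_congr rfl fun p _ => dnum_mul_dbinomAddTerm h₂ h x y p.1 p.2
      _ = dnum τ₁ τ₂ ((n + 1 : ℕ) : ℝ) * ∑ p ∈ antidiagonal (n + 1), dbinomAddTerm τ₁ τ₂ x y p := by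
          rw [← sum_add_distrib, mul_sum]
          refine sum_congr rfl fun p hp => ?_
          rw [← mem_antidiagonal.1 hp, Nat.cast_add, dnum_add (h₂.trans h) h₂]
          ring

noncomputable def cauchyWeight (τ₁ τ₂ : ℝ) {m : ℕ} (x : Fin m → ℝ) (ρ : Fin m → ℕ) : ℝ :=
  τ₁ ^ (∑ j, ∑ i ∈ Ioi j, (ρ j : ℝ) * (x i - ρ i)) *
    τ₂ ^ (∑ j, ∑ i ∈ Ioi j, (ρ i : ℝ) * (x j - ρ j))

lemma cauchyWeight_cons (h₁ : 0 < τ₁) (h₂ : 0 < τ₂) {m : ℕ} (x : Fin (m + 1) → ℝ) (a : ℕ)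
    (ρ : Fin m → ℕ) :
    cauchyWeight τ₁ τ₂ x (Fin.cons a ρ) =
      τ₁ ^ ((a : ℝ) * ((∑ i : Fin m, x i.succ) - ∑ i, (ρ i : ℝ))) *
        τ₂ ^ ((∑ i, (ρ i : ℝ)) * (x 0 - a)) * cauchyWeight τ₁ τ₂ (fun i => x i.succ) ρ := by
  have e₁ : ∑ j, ∑ i ∈ Ioi j, ((Fin.cons a ρ : Fin (m + 1) → ℕ) j : ℝ) *
        (x i - (Fin.cons a ρ : Fin (m + 1) → ℕ) i) =
      (a : ℝ) * ((∑ i : Fin m, x i.succ) - ∑ i, (ρ i : ℝ)) +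
        ∑ j, ∑ i ∈ Ioi j, (ρ j : ℝ) * (x i.succ - ρ i) := by
    rw [Fin.sum_univ_succ, Fin.sum_Ioi_zero]
    simp only [Fin.sum_Ioi_succ, Fin.cons_zero, Fin.cons_succ, mul_sum, ← sum_sub_distrib, mul_sub]
  have e₂ : ∑ j, ∑ i ∈ Ioi j, ((Fin.cons a ρ : Fin (m + 1) → ℕ) i : ℝ) *
        (x j - (Fin.cons a ρ : Fin (m + 1) → ℕ) j) =
      (∑ i, (ρ i : ℝ)) * (x 0 - a) + ∑ j, ∑ i ∈ Ioi j, (ρ i : ℝ) * (x j.succ - ρ j) := by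
    rw [Fin.sum_univ_succ, Fin.sum_Ioi_zero]
    simp only [Fin.sum_Ioi_succ, Fin.cons_zero, Fin.cons_succ, sum_mul]
  rw [cauchyWeight, cauchyWeight, e₁, e₂, Real.rpow_add h₁, Real.rpow_add h₂]
  ring

theorem dbinom_sum (h₂ : 0 < τ₂) (h : τ₂ < τ₁) {m : ℕ} (x : Fin m → ℝ) (n : ℕ) :
    dbinom τ₁ τ₂ (∑ i, x i) n =
      ∑ ρ ∈ antidiagonalTuple m n, cauchyWeight τ₁ τ₂ x ρ * ∏ i, dbinom τ₁ τ₂ (x i) (ρ i) := by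
  induction m generalizing n with
  | zero =>
    cases n with
    | zero => simp [cauchyWeight, dbinom, dfall, dfac]
    | succ n =>
      simp only [univ_eq_empty, sum_empty, antidiagonalTuple_zero_succ, dbinom, dfall]
      rw [prod_eq_zero (mem_range.2 n.succ_pos) (by simp), zero_div]
  | succ m ih =>
    rw [Fin.sum_univ_succ, dbinom_add h₂ h, sum_antidiagonalTuple_succ]
    refine sum_congr rfl fun p _ => ?_
    rw [dbinomAddTerm, ih, mul_sum, mul_sum]
    refine sum_congr rfl fun ρ hρ => ?_
    rw [mem_antidiagonalTuple] at hρ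
    rw [cauchyWeight_cons (h₂.trans h) h₂, Fin.prod_univ_succ]
    simp only [Fin.cons_zero, Fin.cons_succ, ← Nat.cast_sum, hρ]
    ring

lemma cauchyWeight_eq_of_sum_eq {k n : ℕ} (x : Fin (k + 1) → ℝ) (ρ : Fin (k + 1) → ℕ)
    (hρ : ∑ i, ρ i = n) :
    cauchyWeight τ₁ τ₂ x ρ =
      τ₁ ^ (∑ j : Fin k, (ρ j.castSucc : ℝ) *
          ((∑ i ∈ Ioi j.castSucc, x i) - ((n : ℝ) - ((∑ i ∈ Iic j, ρ i.castSucc : ℕ) : ℝ)))) *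
        τ₂ ^ (∑ j : Fin k, ((n : ℝ) - ((∑ i ∈ Iic j, ρ i.castSucc : ℕ) : ℝ)) *
          (x j.castSucc - ρ j.castSucc)) := by
  have hsuffix (j : Fin k) :
      ∑ i ∈ Ioi j.castSucc, (ρ i : ℝ) = n - ((∑ i ∈ Iic j, ρ i.castSucc : ℕ) : ℝ) := by
    rw [← hρ, ← Fin.sum_Iic_castSucc_add_sum_Ioi_castSucc ρ j]
    push_cast
    ring
  have hlast (g : Fin (k + 1) → Fin (k + 1) → ℝ) :
      ∑ j, ∑ i ∈ Ioi j, g j i = ∑ j : Fin k, ∑ i ∈ Ioi j.castSucc, g j.castSucc i := by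
    simp [Fin.sum_univ_castSucc, Ioi_eq_empty.2 fun i _ => Fin.le_last i]
  rw [cauchyWeight, hlast, hlast]
  simp only [← mul_sum, ← sum_mul, sum_sub_distrib, hsuffix]

end

theorem deformed_multivariate_cauchy_general
    (τ₁ τ₂ : ℝ) (hτ₂ : 0 < τ₂) (hττ : τ₂ < τ₁)
    (n k : ℕ) (x : Fin (k + 1) → ℝ) :
    dbinom τ₁ τ₂ (∑ i, x i) n =
      ∑ r ∈ (Fintype.piFinset fun _ : Fin k => Finset.range (n + 1)).filter
          (fun r => ∑ j, r j ≤ n),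
        τ₁ ^ (∑ j : Fin k, (r j : ℝ) *
            ((∑ i ∈ Finset.univ.filter fun i : Fin (k + 1) => (j : ℕ) < (i : ℕ), x i) -
              ((n : ℝ) - ((∑ i ∈ Finset.Iic j, r i : ℕ) : ℝ)))) *
          τ₂ ^ (∑ j : Fin k, ((n : ℝ) - ((∑ i ∈ Finset.Iic j, r i : ℕ) : ℝ)) *
              (x j.castSucc - (r j : ℝ))) *
          ∏ j : Fin (k + 1), dbinom τ₁ τ₂ (x j) ((Fin.snoc r (n - ∑ i, r i) : Fin (k + 1) → ℕ) j) := by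
  have hIoi (j : Fin k) :
      (univ.filter fun i : Fin (k + 1) => (j : ℕ) < (i : ℕ)) = Ioi j.castSucc := by
    ext i; simp [Fin.lt_def]
  rw [dbinom_sum hτ₂ hττ, sum_antidiagonalTuple_succ_eq_sum_snoc]
  refine sum_congr rfl fun r hr => ?_
  have hsum : ∑ i, (Fin.snoc r (n - ∑ i, r i) : Fin (k + 1) → ℕ) i = n := by
    simp only [Fin.sum_univ_castSucc, Fin.snoc_castSucc, Fin.snoc_last]
    exact Nat.add_sub_of_le (mem_filter.1 hr).2
  rw [cauchyWeight_eq_of_sum_eq x _ hsum]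
  simp only [Fin.snoc_castSucc, hIoi]

/-- Multivariate deformed Cauchy formula:
`C(x₁+⋯+x_{k+1}, n) = Σ τ₁^{Σ_j r_j(z_j−(n−s_j))} τ₂^{Σ_j (n−s_j)(x_j−r_j)}
  Π_j C(x_j, r_j)`, summed over tuples `(r₁,…,r_k)` with `r₁+⋯+r_k ≤ n`,
where `s_j = r₁+⋯+r_j`, `r_{k+1} = n − s_k` and `z_j = x_{j+1}+⋯+x_{k+1}`. -/
theorem deformed_multivariate_cauchy
    (τ₁ τ₂ : ℝ) (hτ₂ : 0 < τ₂) (hττ : τ₂ < τ₁)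
    (n k : ℕ) (hk : 1 ≤ k) (x : Fin (k + 1) → ℝ) :
    dbinom τ₁ τ₂ (∑ i, x i) n =
      ∑ r ∈ (Fintype.piFinset fun _ : Fin k => Finset.range (n + 1)).filter
          (fun r => ∑ j, r j ≤ n),
        τ₁ ^ (∑ j : Fin k, (r j : ℝ) *
            ((∑ i ∈ Finset.univ.filter fun i : Fin (k + 1) => (j : ℕ) < (i : ℕ), x i) -
              ((n : ℝ) - ((∑ i ∈ Finset.Iic j, r i : ℕ) : ℝ)))) *
          τ₂ ^ (∑ j : Fin k, ((n : ℝ) - ((∑ i ∈ Finset.Iic j, r i : ℕ) : ℝ)) *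
              (x j.castSucc - (r j : ℝ))) *
          ∏ j : Fin (k + 1), dbinom τ₁ τ₂ (x j) ((Fin.snoc r (n - ∑ i, r i) : Fin (k + 1) → ℕ) j) :=
  deformed_multivariate_cauchy_general τ₁ τ₂ hτ₂ hττ n k x
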